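/- For all integers j, m with 1 ≤ j ≤ m, the sum Σ_{a=j}^{m} (−1)^{m−a}·C(m,a)·C(a−1, a−j)·a^{m−j} equals 1 if j = m and equals 0 if j < m. -/

import Mathlib

/-!
For `j < m` the sum is the `m`-th finite difference at `0` of `a ↦ C(a-1, j-1) a^(m-j)`.
Up to the factor `(j-1)!` this function agrees on `ℕ` with the polynomial
`(x-1)(x-2)⋯(x-j+1) · x^(m-j)` of degree `m - 1`, so the difference vanishes. For `j = m`
the only term is `C(m-1, 0) = 1`.
-/

open Finset Polynomial

theorem Polynomial.sum_range_alternating_choose_mul_eval_eq_zero {R : Type*} [CommRing R]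
    {P : R[X]} {n : ℕ} (hP : P.natDegree < n) :
    ∑ k ∈ range (n + 1), (-1 : R) ^ (n - k) * n.choose k * P.eval (k : R) = 0 := by
  have := congr_fun (fwdDiff_iter_eq_zero_of_degree_lt hP) 0
  rw [fwdDiff_iter_eq_sum_shift] at this
  simpa [zsmul_eq_mul] using this

section descPochhammer

variable {R : Type*} [CommRing R]

lemma natDegree_descPochhammer_comp_sub_one_mul_pow_le [IsDomain R] (i k : ℕ) :
    ((descPochhammer R i).comp (X - 1) * X ^ k).natDegree ≤ i + k := by
  refine natDegree_mul_le.trans (add_le_add ?_ (natDegree_X_pow_le k))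
  rw [natDegree_comp, descPochhammer_natDegree, ← C_1, natDegree_X_sub_C, mul_one]

lemma eval_descPochhammer_comp_sub_one_mul_pow (i a : ℕ) {k : ℕ} (hk : k ≠ 0) :
    ((descPochhammer R i).comp (X - 1) * X ^ k).eval (a : R)
      = (((a - 1).descFactorial i * a ^ k : ℕ) : R) := by
  cases a with
  | zero => simp [hk]
  | succ a => simp [descPochhammer_eval_eq_descFactorial]

end descPochhammer

lemma sum_Icc_alternating_choose_eq_sum_range {j m : ℕ} (hj : 1 ≤ j) (hjm : j < m) :
    ∑ a ∈ Icc j m,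
        (-1 : ℤ) ^ (m - a) * (m.choose a : ℤ) * ((a - 1).choose (a - j) : ℤ) * (a : ℤ) ^ (m - j)
      = ∑ a ∈ range (m + 1),
        (-1 : ℤ) ^ (m - a) * (m.choose a : ℤ) * ((a - 1).choose (j - 1) * a ^ (m - j) : ℕ) := by
  refine sum_subset_zero_on_sdiff (fun a ha => by simp at ha ⊢; omega) (fun a ha => ?_)
    (fun a ha => ?_)
  · have : a < j := by simp at ha; omega
    rcases a with _ | a
    · simp [show m - j ≠ 0 by omega]
    · simp [Nat.choose_eq_zero_of_lt (show a < j - 1 by omega)]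
  · have : j ≤ a := (mem_Icc.1 ha).1
    rw [Nat.choose_symm_of_eq_add (by omega : a - 1 = (a - j) + (j - 1))]
    push_cast
    ring

/-- The binomial orthogonality relation
`Σ_{a=j}^m (−1)^{m−a}·C(m,a)·C(a−1,a−j)·a^{m−j} = δ_{jm}` for `1 ≤ j ≤ m`. -/
theorem binomial_orthogonality (j m : ℕ) (hj : 1 ≤ j) (hjm : j ≤ m) :
    ∑ a ∈ Finset.Icc j m,
        (-1 : ℤ) ^ (m - a) * (m.choose a : ℤ) * ((a - 1).choose (a - j) : ℤ) * (a : ℤ) ^ (m - j)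
      = if j = m then 1 else 0 := by
  obtain rfl | hlt := hjm.eq_or_lt
  · simp
  rw [if_neg hlt.ne, sum_Icc_alternating_choose_eq_sum_range hj hlt]
  have hfact : ((j - 1).factorial : ℤ) ≠ 0 := Nat.cast_ne_zero.2 (j - 1).factorial_ne_zero
  refine mul_right_injective₀ hfact ?_
  have hdeg : ((descPochhammer ℤ (j - 1)).comp (X - 1) * X ^ (m - j)).natDegree < m :=
    (natDegree_descPochhammer_comp_sub_one_mul_pow_le _ _).trans_lt (by omega)
  dsimp only
  rw [mul_zero, mul_sum, ← sum_range_alternating_choose_mul_eval_eq_zero hdeg]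
  refine sum_congr rfl fun a _ => ?_
  rw [eval_descPochhammer_comp_sub_one_mul_pow _ _ (by omega),
    Nat.descFactorial_eq_factorial_mul_choose]
  push_cast
  ring
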